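/- arXiv:2410.21642 — 2 statements merged into one kernel-verified Lean document; each statement's English description precedes it below -/
import Mathlib

section
/- Let V be a finite-dimensional complex vector space, A, B alternating bilinear forms on V, and U ⊆ V a bi-isotropic admissible subspace with common orthogonal W (so U ⊆ W and (A+λB)(U, W) = 0 for all λ). Let π : W → Q := W/U be the quotient map and let A', B' be the induced bilinear forms on Q, characterized by A'(π x, π y) = A(x, y) and B'(π x, π y) = B(x, y) for x, y ∈ W. If L ⊆ V is a bi-Lagrangian subspace of the pencil {A + λB}, then L' := π(L ∩ W) = ((L ∩ W) + U)/U is a bi-Lagrangian subspace of Q with respect to the induced pencil {A' + λB'}; that is, A'(x', y') = 0 and B'(x', y') = 0 for all x', y' ∈ L', and dim L' = dim Q − (1/2)·max_{λ ∈ ℂ ∪ {∞}} rank(A' + λB') (with rank at λ = ∞ meaning rank B'). Moreover, if L is merely bi-isotropic, then L' is bi-isotropic in Q. -/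
open Module LinearMap

variable {V : Type*} [AddCommGroup V] [Module ℂ V]

/-- The skew-orthogonal complement of a subspace `U` with respect to a
bilinear form `C`. -/
noncomputable def orthComp (C : V →ₗ[ℂ] V →ₗ[ℂ] ℂ) (U : Submodule ℂ V) : Submodule ℂ V :=
  ⨅ u ∈ U, LinearMap.ker (C u)

/-- The rank of a bilinear form: the rank of the induced map `V → V*`. -/
noncomputable def formRank (C : V →ₗ[ℂ] V →ₗ[ℂ] ℂ) : ℕ :=
  Module.finrank ℂ (LinearMap.range C)

/-- The member of the pencil `{A + λB : λ ∈ ℂ ∪ {∞}}` at `λ`; `none` plays the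
role of `λ = ∞`, where the form is `B`. -/
noncomputable def pencilForm (A B : V →ₗ[ℂ] V →ₗ[ℂ] ℂ) : Option ℂ → V →ₗ[ℂ] V →ₗ[ℂ] ℂ
  | none => B
  | some l => A + l • B

/-- The rank of the pencil: `max_{λ ∈ ℂ ∪ {∞}} rank (A + λB)`. -/
noncomputable def pencilRank (A B : V →ₗ[ℂ] V →ₗ[ℂ] ℂ) : ℕ :=
  ⨆ l : Option ℂ, formRank (pencilForm A B l)

/-- A subspace `U` is bi-isotropic if both `A` and `B` vanish on `U × U`. -/
def biIsotropic (A B : V →ₗ[ℂ] V →ₗ[ℂ] ℂ) (U : Submodule ℂ V) : Prop :=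
  ∀ u ∈ U, ∀ v ∈ U, A u v = 0 ∧ B u v = 0

/-!
Away from finitely many `λ`, the subspace `U` is admissible at `λ` and both `A + λB` and
`A' + λB'` attain the rank of their pencils: the rank is at least `r` exactly when some `r × r`
minor `det (C (vᵢ) (wⱼ))` is nonzero, and for `C = A + λB` such a minor is a polynomial in `λ`.
Fixing such a `λ` reduces the statement to the single reflexive form `C = A + λB`, for which an
isotropic `L` has `2 dim L + rk C = 2 dim V` iff `L^⊥ = L`. As `S^⊥⊥ = S + ker C`, the equalities
`L^⊥ = L` and `U^⊥ = W` give `(L ∩ W)^⊥ = (L + U)^⊥⊥ = L + U`, and hence `L'^⊥ = L'` in `W / U`.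
-/

theorem Module.Dual.exists_det_ne_zero_of_linearIndependent {K E ι : Type*} [Field K]
    [AddCommGroup E] [Module K E] [Fintype ι] [DecidableEq ι] {f : ι → Module.Dual K E}
    (hf : LinearIndependent K f) : ∃ w : ι → E, (Matrix.of fun i j => f i (w j)).det ≠ 0 := by
  have hsurj : Function.Surjective (LinearMap.pi f) := by
    rw [← LinearMap.range_eq_top, ← Submodule.span_eq (LinearMap.range _), LinearMap.coe_range]
    exact span_flip_eq_top_iff_linearIndependent.2
      (hf.map' (LinearMap.ltoFun K E K K) (LinearMap.ker_eq_bot.2 LinearMap.coe_injective))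
  choose w hw using fun j => hsurj (Pi.single j 1)
  refine ⟨w, ?_⟩
  have : (Matrix.of fun i j => f i (w j)) = 1 := by
    ext i j
    simpa [Matrix.one_apply, Pi.single_apply] using congrFun (hw j) i
  simp [this]

theorem le_formRank_iff_exists_det_ne_zero [FiniteDimensional ℂ V] (C : V →ₗ[ℂ] V →ₗ[ℂ] ℂ)
    {r : ℕ} :
    r ≤ formRank C ↔ ∃ v w : Fin r → V, (Matrix.of fun i j => C (v i) (w j)).det ≠ 0 := by
  constructor
  · intro hr
    obtain ⟨f, hf⟩ := exists_linearIndependent_of_le_finrank hr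
    choose v hv using fun i => (f i).2
    obtain ⟨w, hw⟩ := Module.Dual.exists_det_ne_zero_of_linearIndependent
      (hf.map' (LinearMap.range C).subtype (Submodule.ker_subtype _))
    exact ⟨v, w, by simpa [hv] using hw⟩
  · rintro ⟨v, w, h⟩
    have hC : LinearIndependent ℂ fun i => C (v i) :=
      (Matrix.linearIndependent_rows_of_det_ne_zero h).of_comp
        (LinearMap.pi fun j => LinearMap.applyₗ (w j))
    calc r = finrank ℂ (Submodule.span ℂ (Set.range fun i => C (v i))) := by
          simp [finrank_span_eq_card hC]
      _ ≤ formRank C := Submodule.finrank_mono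
          (Submodule.span_le.2 (Set.range_subset_iff.2 fun i => LinearMap.mem_range_self C (v i)))

section Pencil

variable [FiniteDimensional ℂ V] (A B : V →ₗ[ℂ] V →ₗ[ℂ] ℂ)

theorem bddAbove_range_formRank_pencilForm :
    BddAbove (Set.range fun l => formRank (pencilForm A B l)) :=
  ⟨finrank ℂ (Module.Dual ℂ V), Set.forall_mem_range.2 fun _ => Submodule.finrank_le _⟩

theorem formRank_le_pencilRank (l : Option ℂ) : formRank (pencilForm A B l) ≤ pencilRank A B :=
  le_ciSup (bddAbove_range_formRank_pencilForm A B) l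

theorem exists_formRank_pencilForm_eq_pencilRank :
    ∃ l, formRank (pencilForm A B l) = pencilRank A B :=
  Nat.sSup_mem (Set.range_nonempty _) (bddAbove_range_formRank_pencilForm A B)

open Polynomial in
theorem finite_setOf_formRank_ne_pencilRank :
    {l : ℂ | formRank (A + l • B) ≠ pencilRank A B}.Finite := by
  obtain ⟨l₀, hl₀⟩ := exists_formRank_pencilForm_eq_pencilRank A B
  obtain ⟨v, w, hvw⟩ := (le_formRank_iff_exists_det_ne_zero _).1 hl₀.ge
  let gram (F : V →ₗ[ℂ] V →ₗ[ℂ] ℂ) := Matrix.of fun i j => F (v i) (w j)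
  let p : ℂ[X] := ((X : ℂ[X]) • (gram B).map C + (gram A).map C).det
  have heval : ∀ l : ℂ, p.eval l = (gram (A + l • B)).det := by
    intro l
    rw [← coe_evalRingHom, RingHom.map_det]
    congr 1
    ext i j
    simp only [RingHom.mapMatrix_apply, Matrix.map_apply, Matrix.add_apply, Matrix.smul_apply,
      Matrix.of_apply, gram, coe_evalRingHom, eval_add, eval_mul, eval_C, eval_X, smul_eq_mul,
      LinearMap.add_apply, LinearMap.smul_apply]
    ring
  have hp : p ≠ 0 := by
    intro hp
    apply hvw
    cases l₀ with
    | none =>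
      have h : p.coeff _ = _ := coeff_det_X_add_C_card (gram B) (gram A)
      rw [hp, coeff_zero] at h
      exact h.symm
    | some l => exact (heval l).symm.trans (by rw [hp, eval_zero])
  refine (finite_setOfPred_isRoot hp).subset fun l hl => ?_
  by_contra hroot
  exact hl (le_antisymm (formRank_le_pencilRank A B (some l))
    ((le_formRank_iff_exists_det_ne_zero _).2 ⟨v, w, heval l ▸ hroot⟩))

end Pencil

section Orthogonal

variable {C : V →ₗ[ℂ] V →ₗ[ℂ] ℂ} {S T : Submodule ℂ V}

theorem mem_orthComp {x : V} : x ∈ orthComp C S ↔ ∀ u ∈ S, C u x = 0 := by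
  simp [orthComp]

theorem orthComp_eq_orthogonal : orthComp C S = LinearMap.BilinForm.orthogonal C S := by
  ext
  simp [mem_orthComp]

theorem le_orthComp_iff : S ≤ orthComp C S ↔ ∀ u ∈ S, ∀ v ∈ S, C u v = 0 :=
  ⟨fun h u hu _ hv => mem_orthComp.1 (h hv) u hu,
   fun h v hv => mem_orthComp.2 fun u hu => h u hu v hv⟩

theorem orthComp_sup : orthComp C (S ⊔ T) = orthComp C S ⊓ orthComp C T := by
  ext x
  simp only [Submodule.mem_inf, mem_orthComp]
  refine ⟨fun h => ⟨fun u hu => h u (Submodule.mem_sup_left hu),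
    fun u hu => h u (Submodule.mem_sup_right hu)⟩, ?_⟩
  rintro ⟨hS, hT⟩ _ hu
  obtain ⟨s, hs, t, ht, rfl⟩ := Submodule.mem_sup.1 hu
  simp [hS s hs, hT t ht]

theorem ker_le_orthComp (hC : C.IsRefl) : LinearMap.ker C ≤ orthComp C S :=
  fun x hx => mem_orthComp.2 fun u _ => hC x u (by simp [LinearMap.mem_ker.1 hx])

theorem le_orthComp_orthComp (hC : C.IsRefl) : S ≤ orthComp C (orthComp C S) := by
  simp only [orthComp_eq_orthogonal]
  exact LinearMap.BilinForm.le_orthogonal_orthogonal hC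

variable [FiniteDimensional ℂ V]

theorem finrank_add_finrank_orthComp :
    finrank ℂ S + finrank ℂ (orthComp C S) =
      finrank ℂ V + finrank ℂ (S ⊓ LinearMap.ker C : Submodule ℂ V) := by
  rw [orthComp_eq_orthogonal]
  exact LinearMap.BilinForm.finrank_add_finrank_orthogonal' S

theorem orthComp_orthComp (hC : C.IsRefl) : orthComp C (orthComp C S) = S ⊔ LinearMap.ker C := by
  refine (Submodule.eq_of_le_of_finrank_le
    (sup_le (le_orthComp_orthComp hC) (ker_le_orthComp hC)) ?_).symm
  have h₁ := finrank_add_finrank_orthComp (C := C) (S := S)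
  have h₂ := finrank_add_finrank_orthComp (C := C) (S := orthComp C S)
  have h₃ := Submodule.finrank_sup_add_finrank_inf_eq S (LinearMap.ker C)
  rw [inf_eq_right.2 (ker_le_orthComp hC)] at h₂
  omega

theorem two_mul_finrank_add_formRank_eq_iff (hC : C.IsRefl) {L : Submodule ℂ V}
    (hL : L ≤ orthComp C L) :
    2 * finrank ℂ L + formRank C = 2 * finrank ℂ V ↔ orthComp C L = L := by
  have hdim := finrank_add_finrank_orthComp (C := C) (S := L)
  have hrank : formRank C + finrank ℂ (LinearMap.ker C) = finrank ℂ V :=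
    LinearMap.finrank_range_add_finrank_ker C
  constructor
  · intro h
    have hinf := Submodule.finrank_mono (inf_le_right : L ⊓ LinearMap.ker C ≤ LinearMap.ker C)
    exact (Submodule.eq_of_le_of_finrank_le hL (by omega)).symm
  · intro h
    rw [h, inf_eq_right.2 (h ▸ ker_le_orthComp hC)] at hdim
    omega

end Orthogonal

theorem biIsotropic_iff {A B : V →ₗ[ℂ] V →ₗ[ℂ] ℂ} {M : Submodule ℂ V} :
    biIsotropic A B M ↔ M ≤ orthComp A M ∧ M ≤ orthComp B M := by
  simp only [biIsotropic, le_orthComp_iff]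
  exact ⟨fun h => ⟨fun u hu v hv => (h u hu v hv).1, fun u hu v hv => (h u hu v hv).2⟩,
    fun h u hu v hv => ⟨h.1 u hu v hv, h.2 u hu v hv⟩⟩

theorem biIsotropic.le_orthComp_add_smul {A B : V →ₗ[ℂ] V →ₗ[ℂ] ℂ} {M : Submodule ℂ V}
    (hM : biIsotropic A B M) (l : ℂ) : M ≤ orthComp (A + l • B) M :=
  le_orthComp_iff.2 fun u hu v hv => by simp [(hM u hu v hv).1, (hM u hu v hv).2]

def reduction (U W M : Submodule ℂ V) : Submodule ℂ (W ⧸ U.comap W.subtype) :=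
  (M.comap W.subtype).map (U.comap W.subtype).mkQ

section Reduction

variable {U W : Submodule ℂ V} {C : V →ₗ[ℂ] V →ₗ[ℂ] ℂ}
  {C' : (W ⧸ U.comap W.subtype) →ₗ[ℂ] (W ⧸ U.comap W.subtype) →ₗ[ℂ] ℂ}

theorem isRefl_of_quotient_mk (hC : C.IsRefl)
    (hC' : ∀ x y : W, C' (Submodule.Quotient.mk x) (Submodule.Quotient.mk y) = C x y) :
    C'.IsRefl := by
  intro a b
  induction a using Submodule.Quotient.induction_on
  induction b using Submodule.Quotient.induction_on
  rw [hC', hC']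
  exact hC _ _

theorem reduction_le_orthComp
    (hC' : ∀ x y : W, C' (Submodule.Quotient.mk x) (Submodule.Quotient.mk y) = C x y)
    {M : Submodule ℂ V} (hM : M ≤ orthComp C M) :
    reduction U W M ≤ orthComp C' (reduction U W M) := by
  rintro _ ⟨y, hy, rfl⟩
  refine mem_orthComp.2 ?_
  rintro _ ⟨x, hx, rfl⟩
  exact (hC' x y).trans (mem_orthComp.1 (hM hy) x hx)

theorem orthComp_reduction_le [FiniteDimensional ℂ V] (hC : C.IsRefl) (hUW : U ≤ W)
    (hW : orthComp C U = W)
    (hC' : ∀ x y : W, C' (Submodule.Quotient.mk x) (Submodule.Quotient.mk y) = C x y)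
    {L : Submodule ℂ V} (hL : orthComp C L = L) :
    orthComp C' (reduction U W L) ≤ reduction U W L := by
  intro q hq
  obtain ⟨x, rfl⟩ := Submodule.mkQ_surjective _ q
  have hx : (x : V) ∈ orthComp C (orthComp C (L ⊔ U)) := by
    rw [orthComp_sup, hL, hW, mem_orthComp]
    rintro y ⟨hyL, hyW⟩
    rw [← hC' ⟨y, hyW⟩ x]
    exact mem_orthComp.1 hq _ ⟨⟨y, hyW⟩, hyL, rfl⟩
  rw [orthComp_orthComp hC,
    sup_eq_left.2 ((ker_le_orthComp hC).trans (hL.le.trans le_sup_left))] at hx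
  obtain ⟨l, hl, u, hu, hlu⟩ := Submodule.mem_sup.1 hx
  have hlW : l ∈ W := by
    rw [← add_sub_cancel_right l u, hlu]
    exact sub_mem x.2 (hUW hu)
  refine ⟨⟨l, hlW⟩, hl, (Submodule.Quotient.eq _).2 ?_⟩
  show l - x ∈ U
  rw [← hlu, sub_add_cancel_left]
  exact neg_mem hu

end Reduction

theorem statement_1_general [FiniteDimensional ℂ V]
    (A B : V →ₗ[ℂ] V →ₗ[ℂ] ℂ) (hAalt : A.IsAlt) (hBalt : B.IsAlt)
    (U W : Submodule ℂ V)
    (hadm : {l : ℂ | orthComp (A + l • B) U ≠ W}.Finite)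
    (hUW : U ≤ W)
    (A' B' : (W ⧸ U.comap W.subtype) →ₗ[ℂ] (W ⧸ U.comap W.subtype) →ₗ[ℂ] ℂ)
    (hA' : ∀ x y : W, A' (Submodule.Quotient.mk x) (Submodule.Quotient.mk y)
      = A (x : V) (y : V))
    (hB' : ∀ x y : W, B' (Submodule.Quotient.mk x) (Submodule.Quotient.mk y)
      = B (x : V) (y : V))
    (L : Submodule ℂ V)
    (hLiso : biIsotropic A B L)
    (hLdim : 2 * finrank ℂ L + pencilRank A B = 2 * finrank ℂ V) :
    (biIsotropic A' B' (Submodule.map (U.comap W.subtype).mkQ (L.comap W.subtype)) ∧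
      2 * finrank ℂ (Submodule.map (U.comap W.subtype).mkQ (L.comap W.subtype))
          + pencilRank A' B'
        = 2 * finrank ℂ (W ⧸ U.comap W.subtype)) ∧
    (∀ M : Submodule ℂ V, biIsotropic A B M →
      biIsotropic A' B' (Submodule.map (U.comap W.subtype).mkQ (M.comap W.subtype))) := by
  have hred (M : Submodule ℂ V) (hM : biIsotropic A B M) :
      biIsotropic A' B' (reduction U W M) := by
    rw [biIsotropic_iff] at hM ⊢
    exact ⟨reduction_le_orthComp hA' hM.1, reduction_le_orthComp hB' hM.2⟩
  refine ⟨⟨hred L hLiso, ?_⟩, hred⟩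
  obtain ⟨l, hl⟩ := ((hadm.union (finite_setOf_formRank_ne_pencilRank A B)).union
    (finite_setOf_formRank_ne_pencilRank A' B')).infinite_compl.nonempty
  simp only [Set.mem_compl_iff, Set.mem_union, Set.mem_ofPred_eq, not_or, not_not] at hl
  obtain ⟨⟨hW, hrank⟩, hrank'⟩ := hl
  have hC : (A + l • B).IsRefl := LinearMap.IsAlt.isRefl fun v => by simp [hAalt v, hBalt v]
  have hC' : ∀ x y : W, (A' + l • B') (Submodule.Quotient.mk x) (Submodule.Quotient.mk y)
      = (A + l • B) x y := fun x y => by simp [hA', hB']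
  have hL : orthComp (A + l • B) L = L :=
    (two_mul_finrank_add_formRank_eq_iff hC (hLiso.le_orthComp_add_smul l)).1 (hrank ▸ hLdim)
  have hL' := reduction_le_orthComp hC' (hLiso.le_orthComp_add_smul l)
  rw [← hrank']
  exact (two_mul_finrank_add_formRank_eq_iff (isRefl_of_quotient_mk hC hC') hL').2 <|
    le_antisymm (orthComp_reduction_le hC hUW hW hC' hL) hL'

/-- Linear bi-Poisson reduction: if `U` is bi-isotropic and
admissible with common orthogonal `W`, and `A'`, `B'` are the induced forms on
`Q = W/U`, then the reduction `L' = ((L ∩ W) + U)/U` of a bi-Lagrangian subspace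
`L` is bi-Lagrangian in `Q` (bi-isotropy is stated as
`2·dim L' + rk 𝓛' = 2·dim Q`, i.e. `dim L' = dim Q − (1/2)·rk 𝓛'`).
Moreover, the reduction of any bi-isotropic subspace is bi-isotropic. -/
theorem statement_1 [FiniteDimensional ℂ V]
    (A B : V →ₗ[ℂ] V →ₗ[ℂ] ℂ) (hAalt : A.IsAlt) (hBalt : B.IsAlt)
    (U W : Submodule ℂ V)
    (hbiiso : biIsotropic A B U)
    (hadm : {l : ℂ | orthComp (A + l • B) U ≠ W}.Finite)
    (hUW : U ≤ W)
    (horth : ∀ l : ℂ, ∀ u ∈ U, ∀ w ∈ W, (A + l • B) u w = 0)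
    (A' B' : (W ⧸ U.comap W.subtype) →ₗ[ℂ] (W ⧸ U.comap W.subtype) →ₗ[ℂ] ℂ)
    (hA' : ∀ x y : W, A' (Submodule.Quotient.mk x) (Submodule.Quotient.mk y)
      = A (x : V) (y : V))
    (hB' : ∀ x y : W, B' (Submodule.Quotient.mk x) (Submodule.Quotient.mk y)
      = B (x : V) (y : V))
    (L : Submodule ℂ V)
    (hLiso : biIsotropic A B L)
    (hLdim : 2 * finrank ℂ L + pencilRank A B = 2 * finrank ℂ V) :
    (biIsotropic A' B' (Submodule.map (U.comap W.subtype).mkQ (L.comap W.subtype)) ∧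
      2 * finrank ℂ (Submodule.map (U.comap W.subtype).mkQ (L.comap W.subtype))
          + pencilRank A' B'
        = 2 * finrank ℂ (W ⧸ U.comap W.subtype)) ∧
    (∀ M : Submodule ℂ V, biIsotropic A B M →
      biIsotropic A' B' (Submodule.map (U.comap W.subtype).mkQ (M.comap W.subtype))) :=
  statement_1_general A B hAalt hBalt U W hadm hUW A' B' hA' hB' L hLiso hLdim
end

section
/- Let U ⊆ ℝ^n be open and let 𝓐 = (𝓐^{ij}) and 𝓑 = (𝓑^{ij}) be skew-symmetric n × n matrices of smooth functions on U, each satisfying the Jacobi identity Σ_{cyc(i,j,k)} Σ_{s=1}^n 𝓐^{is} ∂𝓐^{jk}/∂x^s = 0 (and likewise for 𝓑), and compatible in the sense that Σ_{cyc(i,j,k)} Σ_s (𝓐^{is} ∂𝓑^{jk}/∂x^s + 𝓑^{is} ∂𝓐^{jk}/∂x^s) = 0 for all i, j, k. Let f be a smooth function on U that is a common Casimir, i.e., Σ_{s=1}^n 𝓐^{is} ∂f/∂x^s = 0 and Σ_{s=1}^n 𝓑^{is} ∂f/∂x^s = 0 for all i. Then the skew-symmetric matrix 𝓐_f := 𝓐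 + f·𝓑 also satisfies the Jacobi identity Σ_{cyc(i,j,k)} Σ_s 𝓐_f^{is} ∂𝓐_f^{jk}/∂x^s = 0 for all i, j, k. -/
open scoped BigOperators

/-- The cyclic Jacobi expression
`Σ_{cyc(i,j,k)} Σ_s 𝓐^{is} ∂𝓐^{jk}/∂x^s` for a matrix of functions `𝓐` on
`ℝⁿ`; its vanishing for all `i, j, k` is the Jacobi identity. -/
noncomputable def jacobiCyc {n : ℕ} (P : (Fin n → ℝ) → Fin n → Fin n → ℝ)
    (p : Fin n → ℝ) (i j k : Fin n) : ℝ :=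
    (∑ s, P p i s * fderiv ℝ (fun q => P q j k) p (Pi.single s 1))
  + (∑ s, P p j s * fderiv ℝ (fun q => P q k i) p (Pi.single s 1))
  + (∑ s, P p k s * fderiv ℝ (fun q => P q i j) p (Pi.single s 1))

/-- The cyclic compatibility expression
`Σ_{cyc(i,j,k)} Σ_s (P^{is} ∂Q^{jk}/∂x^s + Q^{is} ∂P^{jk}/∂x^s)`. -/
noncomputable def compatCyc {n : ℕ} (P Q : (Fin n → ℝ) → Fin n → Fin n → ℝ)
    (p : Fin n → ℝ) (i j k : Fin n) : ℝ :=
    (∑ s, (P p i s * fderiv ℝ (fun q => Q q j k) p (Pi.single s 1)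
         + Q p i s * fderiv ℝ (fun q => P q j k) p (Pi.single s 1)))
  + (∑ s, (P p j s * fderiv ℝ (fun q => Q q k i) p (Pi.single s 1)
         + Q p j s * fderiv ℝ (fun q => P q k i) p (Pi.single s 1)))
  + (∑ s, (P p k s * fderiv ℝ (fun q => Q q i j) p (Pi.single s 1)
         + Q p k s * fderiv ℝ (fun q => P q i j) p (Pi.single s 1)))

/-- If `𝓐`, `𝓑` are compatible skew-symmetric matrices of
smooth functions on an open `U ⊆ ℝⁿ`, each satisfying the Jacobi identity, and
`f` is a smooth common Casimir function of both, then `𝓐_f = 𝓐 + f·𝓑` also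
satisfies the Jacobi identity on `U`. -/
theorem statement_11 (n : ℕ) (U : Set (Fin n → ℝ)) (hU : IsOpen U)
    (A B : (Fin n → ℝ) → Fin n → Fin n → ℝ)
    (hAsm : ∀ i j, ContDiffOn ℝ (⊤ : ℕ∞) (fun p => A p i j) U)
    (hBsm : ∀ i j, ContDiffOn ℝ (⊤ : ℕ∞) (fun p => B p i j) U)
    (hAskew : ∀ p ∈ U, ∀ i j, A p i j = -A p j i)
    (hBskew : ∀ p ∈ U, ∀ i j, B p i j = -B p j i)
    (hAjac : ∀ p ∈ U, ∀ i j k, jacobiCyc A p i j k = 0)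
    (hBjac : ∀ p ∈ U, ∀ i j k, jacobiCyc B p i j k = 0)
    (hcompat : ∀ p ∈ U, ∀ i j k, compatCyc A B p i j k = 0)
    (f : (Fin n → ℝ) → ℝ) (hf : ContDiffOn ℝ (⊤ : ℕ∞) f U)
    (hfA : ∀ p ∈ U, ∀ i, ∑ s, A p i s * fderiv ℝ f p (Pi.single s 1) = 0)
    (hfB : ∀ p ∈ U, ∀ i, ∑ s, B p i s * fderiv ℝ f p (Pi.single s 1) = 0) :
    ∀ p ∈ U, ∀ i j k,
      jacobiCyc (fun q a b => A q a b + f q * B q a b) p i j k = 0 := by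
  intro p hp i j k
  have hmem := hU.mem_nhds hp
  have hf' : DifferentiableAt ℝ f p :=
    (hf.contDiffAt hmem).differentiableAt (by simp)
  have hA' : ∀ a b, DifferentiableAt ℝ (fun q => A q a b) p := fun a b =>
    ((hAsm a b).contDiffAt hmem).differentiableAt (by simp)
  have hB' : ∀ a b, DifferentiableAt ℝ (fun q => B q a b) p := fun a b =>
    ((hBsm a b).contDiffAt hmem).differentiableAt (by simp)
  have hd : ∀ (a b s : Fin n),
      fderiv ℝ (fun q => A q a b + f q * B q a b) p (Pi.single s 1)
        = fderiv ℝ (fun q => A q a b) p (Pi.single s 1)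
          + fderiv ℝ f p (Pi.single s 1) * B p a b
          + f p * fderiv ℝ (fun q => B q a b) p (Pi.single s 1) := by
    intro a b s
    rw [fderiv_fun_add (hA' a b) (hf'.fun_mul (hB' a b)), fderiv_fun_mul hf' (hB' a b)]
    simp only [ContinuousLinearMap.add_apply, ContinuousLinearMap.smul_apply,
      smul_eq_mul]
    ring
  have key : ∀ (a b c : Fin n),
      (∑ s, (A p a s + f p * B p a s) *
        (fderiv ℝ (fun q => A q b c) p (Pi.single s 1)
          + fderiv ℝ f p (Pi.single s 1) * B p b c
          + f p * fderiv ℝ (fun q => B q b c) p (Pi.single s 1)))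
      = (∑ s, A p a s * fderiv ℝ (fun q => A q b c) p (Pi.single s 1))
        + f p * (∑ s, (A p a s * fderiv ℝ (fun q => B q b c) p (Pi.single s 1)
          + B p a s * fderiv ℝ (fun q => A q b c) p (Pi.single s 1)))
        + f p * f p * (∑ s, B p a s * fderiv ℝ (fun q => B q b c) p (Pi.single s 1))
        + B p b c * (∑ s, A p a s * fderiv ℝ f p (Pi.single s 1))
        + f p * B p b c * (∑ s, B p a s * fderiv ℝ f p (Pi.single s 1)) := by
    intro a b c
    rw [Finset.mul_sum, Finset.mul_sum, Finset.mul_sum, Finset.mul_sum,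
        ← Finset.sum_add_distrib, ← Finset.sum_add_distrib, ← Finset.sum_add_distrib,
        ← Finset.sum_add_distrib]
    exact Finset.sum_congr rfl fun s _ => by ring
  have hJA := hAjac p hp i j k
  have hJB := hBjac p hp i j k
  have hC := hcompat p hp i j k
  simp only [jacobiCyc, compatCyc] at hJA hJB hC ⊢
  simp only [hd]
  rw [key i j k, key j k i, key k i j,
      hfA p hp i, hfA p hp j, hfA p hp k, hfB p hp i, hfB p hp j, hfB p hp k]
  linear_combination hJA + f p * hC + f p * f p * hJB
end
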